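/- arXiv:1707.06688 — 2 statements merged into one kernel-verified Lean document; each statement's English description precedes it below -/
import Mathlib

section
/- (Sampling Lemma) Let Λ ⊂ ℝ^n be a full-rank lattice and σ > 0. Let T ~ N(0, σ² I_n) and, conditionally on T = t, let X ~ D_{Λ+t, σ}. Then X and T are identically distributed, i.e. X ~ N(0, σ² I_n). Equivalently, for every Borel set A ⊆ ℝ^n, ∫_{ℝ^n} f_σ(t) · f_σ(A ∩ (Λ+t)) / f_σ(Λ+t) dt = ∫_A f_σ(x) dx. -/
open MeasureTheory Real Filter Pointwise
open scoped ENNReal RealInnerProductSpace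

noncomputable section

/-- The (continuous) Gaussian density with parameter `σ` on `ℝⁿ`:
`f_σ(x) = (2πσ²)^{-n/2} exp(-‖x‖²/(2σ²))`. -/
def gaussF (n : ℕ) (σ : ℝ) (x : EuclideanSpace ℝ (Fin n)) : ℝ :=
  (2 * π * σ ^ 2) ^ (-(n : ℝ) / 2) * Real.exp (-‖x‖ ^ 2 / (2 * σ ^ 2))

/-- The Gaussian mass `f_σ(S) = Σ_{y ∈ S} f_σ(y)` of a (countable) set `S ⊆ ℝⁿ`. -/
def gaussMass (n : ℕ) (σ : ℝ) (S : Set (EuclideanSpace ℝ (Fin n))) : ℝ :=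
  ∑' y : S, gaussF n σ y

/-- The Gaussian measure `N(0, σ² Iₙ)` on `ℝⁿ`, given by its density w.r.t. Lebesgue measure. -/
def gaussMeasure (n : ℕ) (σ : ℝ) : Measure (EuclideanSpace ℝ (Fin n)) :=
  volume.withDensity fun x => ENNReal.ofReal (gaussF n σ x)

/-- The coset `S + t` of a set `S ⊆ ℝⁿ`, i.e. `{x | x - t ∈ S}`. -/
def coset (n : ℕ) (S : Set (EuclideanSpace ℝ (Fin n))) (t : EuclideanSpace ℝ (Fin n)) :
    Set (EuclideanSpace ℝ (Fin n)) := {x | x - t ∈ S}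

/-- The Voronoi cell of `S`: `{x | ⟪x,y⟫ ≤ ‖y‖²/2 for all y ∈ S}`. -/
def voronoi (n : ℕ) (S : Set (EuclideanSpace ℝ (Fin n))) : Set (EuclideanSpace ℝ (Fin n)) :=
  {x | ∀ y ∈ S, ⟪x, y⟫ ≤ ‖y‖ ^ 2 / 2}

/-- The inverse error function `err⁻¹_ε(Λ)`: the least `s > 0` such that a standard Gaussian
leaves `s · V(Λ)` with probability at most `ε`. -/
def errInv (n : ℕ) (ε : ℝ) (S : Set (EuclideanSpace ℝ (Fin n))) : ℝ :=
  sInf {s : ℝ | 0 < s ∧ gaussMeasure n 1 ((s • voronoi n S)ᶜ) ≤ ENNReal.ofReal ε}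

/-- The Shannon entropy (in nats) of the discrete Gaussian `D_{S,σ}` supported on `S`,
which assigns mass `f_σ(y)/f_σ(S)` to each `y ∈ S`. -/
def dgEntropy (n : ℕ) (σ : ℝ) (S : Set (EuclideanSpace ℝ (Fin n))) : ℝ :=
  -∑' y : S, (gaussF n σ y / gaussMass n σ S) * Real.log (gaussF n σ y / gaussMass n σ S)

/-- The flatness factor `ε_Λ(σ) = sup_{x ∈ V(Λ)} |V(Λ)·f_σ(Λ+x) − 1|`. -/
def flatness (n : ℕ) (L : Submodule ℤ (EuclideanSpace ℝ (Fin n))) (σ : ℝ) : ℝ :=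
  ⨆ x : voronoi n (L : Set (EuclideanSpace ℝ (Fin n))),
    |ZLattice.covolume L volume *
        gaussMass n σ (coset n (L : Set (EuclideanSpace ℝ (Fin n))) x) - 1|

/-!
Write `f_σ(Λ + t) = ∑_{l ∈ Λ} f_σ(l + t)`. By Tonelli and the translation invariance of Lebesgue
measure, `∫ φ(t) ∑_l g(l + t) dt = ∫ (∑_l φ(l + u)) g(u) du` for nonnegative `φ, g`. Taking
`φ = f_σ / f_σ(Λ + ·)`, whose periodization is identically `1` because the denominator is
`Λ`-periodic, and `g = 1_A f_σ` turns the left-hand side of the sampling lemma into `∫_A f_σ`.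
The only analytic input is that `f_σ(Λ + t)` is finite, i.e. that Gaussians are summable over
discrete subgroups, which follows from the summability of `‖l - x‖⁻ᵐ` for `m > rank Λ`.
-/

section Periodization

variable {G : Type*} [AddCommGroup G] (L : Submodule ℤ G)

def periodize (g : G → ℝ≥0∞) (t : G) : ℝ≥0∞ :=
  ∑' l : L, g (l + t)

lemma periodize_mono {g h : G → ℝ≥0∞} (hgh : g ≤ h) : periodize L g ≤ periodize L h :=
  fun _ => ENNReal.tsum_le_tsum fun _ => hgh _

lemma periodize_add_of_mem (g : G → ℝ≥0∞) {l : G} (hl : l ∈ L) (t : G) :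
    periodize L g (l + t) = periodize L g t := by
  rw [periodize, periodize, ← (Equiv.addRight (⟨l, hl⟩ : L)).tsum_eq fun m : L => g (m + t)]
  simp only [Equiv.coe_addRight, Submodule.coe_add, add_assoc]

lemma tsum_sub_eq_periodize (g : G → ℝ≥0∞) (u : G) :
    ∑' l : L, g (u - l) = periodize L g u := by
  rw [← (Equiv.neg L).tsum_eq]
  simp only [periodize, Equiv.neg_apply, Submodule.coe_neg, sub_neg_eq_add, add_comm u]

lemma periodize_div_periodize_self (g : G → ℝ≥0∞) (h0 : ∀ t, periodize L g t ≠ 0)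
    (htop : ∀ t, periodize L g t ≠ ∞) :
    periodize L (fun t => g t / periodize L g t) = 1 := by
  funext t
  have hperiodic : ∀ l : L, periodize L g (l + t) = periodize L g t :=
    fun l => periodize_add_of_mem L g l.2 t
  show ∑' l : L, g (l + t) / periodize L g (l + t) = 1
  simp_rw [hperiodic, div_eq_mul_inv, ENNReal.tsum_mul_right]
  exact ENNReal.mul_inv_cancel (h0 t) (htop t)

variable [MeasurableSpace G] [MeasurableAdd G] [Countable L]

lemma measurable_periodize {g : G → ℝ≥0∞} (hg : Measurable g) : Measurable (periodize L g) :=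
  Measurable.tsum fun _ => hg.comp (measurable_const_add _)

/-- Unfolding: both sides equal `∑_{l ∈ L} ∫ φ(t) g(l + t) dμ(t)`. -/
lemma lintegral_mul_periodize (μ : Measure G) [μ.IsAddRightInvariant] {φ g : G → ℝ≥0∞}
    (hφ : Measurable φ) (hg : Measurable g) :
    ∫⁻ t, φ t * periodize L g t ∂μ = ∫⁻ u, periodize L φ u * g u ∂μ := by
  calc ∫⁻ t, φ t * periodize L g t ∂μ
      = ∑' l : L, ∫⁻ t, φ t * g (l + t) ∂μ := by
        simp_rw [periodize, ← ENNReal.tsum_mul_left]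
        exact lintegral_tsum fun l => (hφ.mul (hg.comp (measurable_const_add _))).aemeasurable
    _ = ∑' l : L, ∫⁻ u, φ (u - l) * g u ∂μ := by
        refine tsum_congr fun l => ?_
        rw [← lintegral_add_right_eq_self (fun u => φ (u - l) * g u) (l : G)]
        simp only [add_sub_cancel_right, add_comm]
    _ = ∫⁻ u, periodize L φ u * g u ∂μ := by
        have hφ_sub : ∀ l : G, Measurable fun u => φ (u - l) := fun l => by
          simp_rw [sub_eq_add_neg]
          exact hφ.comp (measurable_add_const (-l))
        rw [← lintegral_tsum (f := fun (l : L) u => φ (u - l) * g u)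
          fun l => ((hφ_sub l).mul hg).aemeasurable]
        simp_rw [ENNReal.tsum_mul_right, tsum_sub_eq_periodize]

theorem lintegral_mul_periodize_div_periodize (μ : Measure G) [μ.IsAddRightInvariant]
    {f g : G → ℝ≥0∞} (hf : Measurable f) (hg : Measurable g)
    (h0 : ∀ t, periodize L f t ≠ 0) (htop : ∀ t, periodize L f t ≠ ∞) :
    ∫⁻ t, f t * (periodize L g t / periodize L f t) ∂μ = ∫⁻ u, g u ∂μ := by
  have hφ : Measurable fun t => f t / periodize L f t := hf.div (measurable_periodize L hf)
  calc ∫⁻ t, f t * (periodize L g t / periodize L f t) ∂μ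
      = ∫⁻ t, f t / periodize L f t * periodize L g t ∂μ := by
        refine lintegral_congr fun t => ?_
        simp only [div_eq_mul_inv]
        ring
    _ = ∫⁻ u, g u ∂μ := by
        rw [lintegral_mul_periodize L μ hφ hg, periodize_div_periodize_self L f h0 htop]
        simp

end Periodization

lemma tsum_coset {β : Type*} [AddCommMonoid β] [TopologicalSpace β] (n : ℕ)
    (S : Set (EuclideanSpace ℝ (Fin n))) (g : EuclideanSpace ℝ (Fin n) → β)
    (t : EuclideanSpace ℝ (Fin n)) :
    ∑' y : coset n S t, g y = ∑' y : S, g (y + t) :=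
  let e : S ≃ coset n S t := (Equiv.addRight t).subtypeEquiv fun y => by simp [coset]
  (e.tsum_eq fun y => g y).symm

lemma ZLattice.summable_exp_neg_mul_norm_sub_sq {E : Type*} [NormedAddCommGroup E]
    [NormedSpace ℝ E] [FiniteDimensional ℝ E] (L : Submodule ℤ E) [DiscreteTopology L]
    {a : ℝ} (ha : 0 < a) (x : E) :
    Summable fun z : L => Real.exp (-a * ‖(z : E) - x‖ ^ 2) := by
  set k := Module.finrank ℤ L + 1
  have hbound : ∀ s : ℝ, 0 < s →
      Real.exp (-a * s ^ 2) ≤ k.factorial / a ^ k * s⁻¹ ^ (2 * k) := by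
    intro s hs
    have hexp := Real.pow_div_factorial_le_exp (a * s ^ 2) (by positivity) k
    rw [neg_mul, Real.exp_neg]
    calc (Real.exp (a * s ^ 2))⁻¹ ≤ ((a * s ^ 2) ^ k / k.factorial)⁻¹ :=
          inv_anti₀ (by positivity) hexp
      _ = k.factorial / a ^ k * s⁻¹ ^ (2 * k) := by
          rw [inv_pow]
          field_simp
          ring
  refine .of_norm_bounded_eventually
    ((ZLattice.summable_norm_sub_inv_pow L (2 * k) (by omega) x).mul_left (k.factorial / a ^ k)) ?_
  have hsingle : {z : L | (z : E) = x}.Subsingleton :=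
    fun z₁ h₁ z₂ h₂ => Subtype.ext (h₁.trans h₂.symm)
  refine Filter.eventually_cofinite.2 (hsingle.finite.subset fun z hz => ?_)
  by_contra hne
  refine hz ?_
  rw [Real.norm_of_nonneg (Real.exp_pos _).le]
  exact hbound _ (norm_pos_iff.2 (sub_ne_zero.2 hne))

section Gaussian

variable {n : ℕ} {σ : ℝ}

def gaussDensity (n : ℕ) (σ : ℝ) (x : EuclideanSpace ℝ (Fin n)) : ℝ≥0∞ :=
  ENNReal.ofReal (gaussF n σ x)

lemma gaussF_nonneg (x : EuclideanSpace ℝ (Fin n)) : 0 ≤ gaussF n σ x := by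
  unfold gaussF
  positivity

lemma gaussF_pos (hσ : 0 < σ) (x : EuclideanSpace ℝ (Fin n)) : 0 < gaussF n σ x := by
  unfold gaussF
  positivity

lemma toReal_gaussDensity (x : EuclideanSpace ℝ (Fin n)) :
    (gaussDensity n σ x).toReal = gaussF n σ x :=
  ENNReal.toReal_ofReal (gaussF_nonneg x)

lemma measurable_gaussDensity : Measurable (gaussDensity n σ) := by
  unfold gaussDensity gaussF
  fun_prop

lemma summable_gaussF_add (L : Submodule ℤ (EuclideanSpace ℝ (Fin n))) [DiscreteTopology L]
    (hσ : 0 < σ) (t : EuclideanSpace ℝ (Fin n)) :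
    Summable fun l : L => gaussF n σ (l + t) := by
  have ha : 0 < (2 * σ ^ 2)⁻¹ := by positivity
  refine ((ZLattice.summable_exp_neg_mul_norm_sub_sq L ha (-t)).mul_left
    ((2 * π * σ ^ 2) ^ (-(n : ℝ) / 2))).congr fun l => ?_
  simp only [gaussF, sub_neg_eq_add]
  congr 2
  ring

lemma gaussMass_inter_coset (L : Submodule ℤ (EuclideanSpace ℝ (Fin n)))
    (A : Set (EuclideanSpace ℝ (Fin n))) (t : EuclideanSpace ℝ (Fin n)) :
    gaussMass n σ (A ∩ coset n L t) = (periodize L (A.indicator (gaussDensity n σ)) t).toReal := by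
  have hfin : ∀ y, A.indicator (gaussDensity n σ) y ≠ ∞ := fun y =>
    ((Set.indicator_le_self A _ y).trans_lt ENNReal.ofReal_lt_top).ne
  rw [periodize, ENNReal.tsum_toReal_eq fun l => hfin _]
  refine Eq.trans ?_ (tsum_coset n L (fun y => (A.indicator (gaussDensity n σ) y).toReal) t)
  rw [gaussMass, tsum_subtype (A ∩ coset n L t) (gaussF n σ),
    tsum_subtype (coset n L t) fun y => (A.indicator (gaussDensity n σ) y).toReal]
  congr 1 with y
  by_cases hA : y ∈ A <;> by_cases hC : y ∈ coset n L t <;>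
    simp [hA, hC, gaussDensity, gaussF_nonneg]

lemma gaussMass_coset (L : Submodule ℤ (EuclideanSpace ℝ (Fin n))) (t : EuclideanSpace ℝ (Fin n)) :
    gaussMass n σ (coset n L t) = (periodize L (gaussDensity n σ) t).toReal := by
  simpa using gaussMass_inter_coset L Set.univ t

lemma periodize_gaussDensity_ne_top (L : Submodule ℤ (EuclideanSpace ℝ (Fin n)))
    [DiscreteTopology L] (hσ : 0 < σ) (t : EuclideanSpace ℝ (Fin n)) :
    periodize L (gaussDensity n σ) t ≠ ∞ := by
  unfold periodize gaussDensity
  rw [← ENNReal.ofReal_tsum_of_nonneg (fun l => gaussF_nonneg _) (summable_gaussF_add L hσ t)]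
  exact ENNReal.ofReal_ne_top

lemma periodize_gaussDensity_ne_zero (L : Submodule ℤ (EuclideanSpace ℝ (Fin n)))
    (hσ : 0 < σ) (t : EuclideanSpace ℝ (Fin n)) :
    periodize L (gaussDensity n σ) t ≠ 0 := by
  simp only [periodize, ne_eq, ENNReal.tsum_eq_zero, not_forall]
  exact ⟨0, by simpa [gaussDensity] using gaussF_pos hσ _⟩

end Gaussian

theorem sampling_lemma_general (n : ℕ) (L : Submodule ℤ (EuclideanSpace ℝ (Fin n)))
    [DiscreteTopology L] (σ : ℝ) (hσ : 0 < σ)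
    (A : Set (EuclideanSpace ℝ (Fin n))) (hA : MeasurableSet A) :
    ∫ t, gaussF n σ t *
        (gaussMass n σ (A ∩ coset n (L : Set (EuclideanSpace ℝ (Fin n))) t) /
          gaussMass n σ (coset n (L : Set (EuclideanSpace ℝ (Fin n))) t)) =
      ∫ x in A, gaussF n σ x := by
  have : Countable L := TopologicalSpace.separableSpace_iff_countable.1 inferInstance
  have hF : Measurable (gaussDensity n σ) := measurable_gaussDensity
  have hP0 := periodize_gaussDensity_ne_zero L hσ
  have hPtop := periodize_gaussDensity_ne_top L hσ
  have hPAtop : ∀ t, periodize L (A.indicator (gaussDensity n σ)) t ≠ ∞ := fun t =>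
    (periodize_mono L (Set.indicator_le_self A _) t |>.trans_lt (hPtop t).lt_top).ne
  set Φ := fun t => gaussDensity n σ t *
    (periodize L (A.indicator (gaussDensity n σ)) t / periodize L (gaussDensity n σ) t)
  have hΦ_lt_top : ∀ t, Φ t < ∞ := fun t =>
    ENNReal.mul_lt_top ENNReal.ofReal_lt_top (ENNReal.div_lt_top (hPAtop t) (hP0 t))
  have hΦ : Measurable Φ :=
    hF.mul ((measurable_periodize L (hF.indicator hA)).div (measurable_periodize L hF))
  calc _ = ∫ t, (Φ t).toReal := by
        congr 1 with t
        rw [gaussMass_inter_coset, gaussMass_coset, ENNReal.toReal_mul, ENNReal.toReal_div,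
          toReal_gaussDensity]
    _ = (∫⁻ t, Φ t).toReal := integral_toReal hΦ.aemeasurable (ae_of_all _ hΦ_lt_top)
    _ = (∫⁻ x in A, gaussDensity n σ x).toReal := by
        rw [lintegral_mul_periodize_div_periodize L volume hF (hF.indicator hA) hP0 hPtop,
          lintegral_indicator hA]
    _ = ∫ x in A, gaussF n σ x := by
        rw [← integral_toReal hF.aemeasurable (ae_of_all _ fun _ => ENNReal.ofReal_lt_top)]
        simp only [toReal_gaussDensity]

/-- Sampling Lemma: if `T ~ N(0,σ²Iₙ)` and `X ~ D_{Λ+T,σ}`, then `X ~ N(0,σ²Iₙ)`;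
equivalently `∫ f_σ(t)·f_σ(A ∩ (Λ+t))/f_σ(Λ+t) dt = ∫_A f_σ(x) dx` for every Borel `A`. -/
theorem sampling_lemma (n : ℕ) (L : Submodule ℤ (EuclideanSpace ℝ (Fin n)))
    [DiscreteTopology L] [IsZLattice ℝ L] (σ : ℝ) (hσ : 0 < σ)
    (A : Set (EuclideanSpace ℝ (Fin n))) (hA : MeasurableSet A) :
    ∫ t, gaussF n σ t *
        (gaussMass n σ (A ∩ coset n (L : Set (EuclideanSpace ℝ (Fin n))) t) /
          gaussMass n σ (coset n (L : Set (EuclideanSpace ℝ (Fin n))) t)) =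
      ∫ x in A, gaussF n σ x :=
  sampling_lemma_general n L σ hσ A hA
end
end

section
/- Let Λ ⊂ ℝ^n be a full-rank lattice, σ_s, σ_w > 0, α = σ_s²/(σ_s²+σ_w²) and σ_eff² = σ_s²σ_w²/(σ_s²+σ_w²). Let X ~ D_{Λ, σ_s} and W ~ N(0, σ_w² I_n) be independent. Then the effective noise W_eff = (α−1)X + αW has probability density g given by g(w) = (2πσ_eff²)^{−n/2} · exp(−‖w‖²/(2σ_eff²)) · f_{√α·σ_s}(Λ + w) / f_{σ_s}(Λ) for all w ∈ ℝ^n. -/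
open MeasureTheory Real Filter Pointwise
open scoped ENNReal RealInnerProductSpace

noncomputable section

set_option maxHeartbeats 1000000 in
/-- the density of the effective noise `W_eff = (α−1)X + αW`,
`X ~ D_{Λ,σ_s}`, `W ~ N(0,σ_w²Iₙ)`, is `g(w) = f_{σ_eff}(w)·f_{√α·σ_s}(Λ+w)/f_{σ_s}(Λ)`. -/
theorem effective_noise_density (n : ℕ) (L : Submodule ℤ (EuclideanSpace ℝ (Fin n)))
    [DiscreteTopology L] [IsZLattice ℝ L]
    (σs σw : ℝ) (hσs : 0 < σs) (hσw : 0 < σw)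
    (α σeff : ℝ)
    (hα : α = σs ^ 2 / (σs ^ 2 + σw ^ 2))
    (hσeff : σeff = Real.sqrt (σs ^ 2 * σw ^ 2 / (σs ^ 2 + σw ^ 2)))
    (w : EuclideanSpace ℝ (Fin n)) :
    (∑' x : (L : Set (EuclideanSpace ℝ (Fin n))),
        (gaussF n σs x / gaussMass n σs (L : Set (EuclideanSpace ℝ (Fin n)))) *
          gaussF n (α * σw) (w - (α - 1) • (x : EuclideanSpace ℝ (Fin n))))
      = gaussF n σeff w *
          gaussMass n (Real.sqrt α * σs) (coset n (L : Set (EuclideanSpace ℝ (Fin n))) w) /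
          gaussMass n σs (L : Set (EuclideanSpace ℝ (Fin n))) := by
  have ha : (0:ℝ) < σs ^ 2 := by positivity
  have hb : (0:ℝ) < σw ^ 2 := by positivity
  have hab : (0:ℝ) < σs ^ 2 + σw ^ 2 := by positivity
  have hα0 : 0 < α := by rw [hα]; positivity
  have hsa : Real.sqrt α ^ 2 = α := Real.sq_sqrt hα0.le
  have hse : σeff ^ 2 = σs ^ 2 * σw ^ 2 / (σs ^ 2 + σw ^ 2) := by
    rw [hσeff, Real.sq_sqrt (by positivity)]
  have hse0 : (0:ℝ) < σeff ^ 2 := by rw [hse]; positivity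
  have hασw : (0:ℝ) < (α * σw) ^ 2 := by positivity
  have hασs : (0:ℝ) < (Real.sqrt α * σs) ^ 2 := by rw [mul_pow, hsa]; positivity
  set M := gaussMass n σs (L : Set (EuclideanSpace ℝ (Fin n))) with hM
  have key : ∀ x : EuclideanSpace ℝ (Fin n),
      gaussF n σs x * gaussF n (α * σw) (w - (α - 1) • x)
        = gaussF n σeff w * gaussF n (Real.sqrt α * σs) (x + w) := by
    intro x
    unfold gaussF
    have hnorm1 : ‖w - (α - 1) • x‖ ^ 2
        = ‖w‖ ^ 2 - 2 * (α - 1) * ⟪w, x⟫ + (α - 1) ^ 2 * ‖x‖ ^ 2 := by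
      rw [norm_sub_sq_real, real_inner_smul_right, norm_smul]
      simp only [Real.norm_eq_abs, mul_pow, sq_abs]
      ring
    have hnorm2 : ‖x + w‖ ^ 2 = ‖x‖ ^ 2 + 2 * ⟪w, x⟫ + ‖w‖ ^ 2 := by
      rw [norm_add_sq_real, real_inner_comm]
    rw [mul_mul_mul_comm, ← Real.mul_rpow (by positivity) (by positivity),
        ← Real.exp_add,
        mul_mul_mul_comm ((2 * π * σeff ^ 2 : ℝ) ^ (-(n:ℝ)/2)),
        ← Real.mul_rpow (by positivity) (by positivity), ← Real.exp_add]
    have hconst : (2 * π * σs ^ 2) * (2 * π * (α * σw) ^ 2)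
        = (2 * π * σeff ^ 2) * (2 * π * (Real.sqrt α * σs) ^ 2) := by
      rw [hse, mul_pow, mul_pow, hsa, hα]
      field_simp
    have hexp : -‖x‖ ^ 2 / (2 * σs ^ 2) + -‖w - (α - 1) • x‖ ^ 2 / (2 * (α * σw) ^ 2)
        = -‖w‖ ^ 2 / (2 * σeff ^ 2) + -‖x + w‖ ^ 2 / (2 * (Real.sqrt α * σs) ^ 2) := by
      rw [hnorm1, hnorm2, hse, mul_pow, mul_pow, hsa, hα]
      have h1 : σs ^ 2 ≠ 0 := ha.ne'
      have h2 : σw ^ 2 ≠ 0 := hb.ne'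
      have h3 : σs ^ 2 + σw ^ 2 ≠ 0 := hab.ne'
      field_simp
      ring
    rw [hconst, hexp]
  have hterm : ∀ x : (L : Set (EuclideanSpace ℝ (Fin n))),
      gaussF n σs x / M * gaussF n (α * σw) (w - (α - 1) • (x : EuclideanSpace ℝ (Fin n)))
        = gaussF n σeff w / M * gaussF n (Real.sqrt α * σs)
            ((x : EuclideanSpace ℝ (Fin n)) + w) := by
    intro x
    rw [div_mul_eq_mul_div, key x, mul_div_right_comm]
  rw [tsum_congr hterm, tsum_mul_left]
  let e : (L : Set (EuclideanSpace ℝ (Fin n))) ≃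
      coset n (L : Set (EuclideanSpace ℝ (Fin n))) w :=
    { toFun := fun x => ⟨(x : EuclideanSpace ℝ (Fin n)) + w, by
        simp only [coset, Set.mem_setOf_eq, add_sub_cancel_right]; exact x.2⟩
      invFun := fun y => ⟨(y : EuclideanSpace ℝ (Fin n)) - w, y.2⟩
      left_inv := fun x => by simp
      right_inv := fun y => by simp }
  have hmass : (∑' x : (L : Set (EuclideanSpace ℝ (Fin n))),
      gaussF n (Real.sqrt α * σs) ((x : EuclideanSpace ℝ (Fin n)) + w))
        = gaussMass n (Real.sqrt α * σs) (coset n (L : Set (EuclideanSpace ℝ (Fin n))) w) := by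
    unfold gaussMass
    have h1 : ∀ x : (L : Set (EuclideanSpace ℝ (Fin n))),
        gaussF n (Real.sqrt α * σs) ((x : EuclideanSpace ℝ (Fin n)) + w)
          = gaussF n (Real.sqrt α * σs) (e x : EuclideanSpace ℝ (Fin n)) := fun x => rfl
    rw [tsum_congr h1]
    exact e.tsum_eq fun y => gaussF n (Real.sqrt α * σs) (y : EuclideanSpace ℝ (Fin n))
  rw [hmass, div_mul_eq_mul_div]
end
end
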